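/- The absolute value of the diagonal entry satisfies the closed form |F^{|j|}_{m,m}| = (1/√π) · (1/√(|j|+2m-1)) · ((m-1)! · (|j|+m-1)!) / (|j|+2m-2)! for all m ≥ 1 and j ∈ ℤ. -/
import Mathlib

open Real

noncomputable def acoef (j : ℤ) (k : ℕ) (m n : ℤ) : ℝ :=
  if n = m + j ∧ (k : ℤ) < min |m| |n| ∧ m * n > 0 then
    -(1 / Real.sqrt π) * Real.sqrt ((j.natAbs : ℝ) + 2 * k + 1) /
        (((min |m| |n| : ℤ) : ℝ) + (j.natAbs : ℝ) + k) *
      ∏ i ∈ Finset.Icc 1 k,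
        (((min |m| |n| : ℤ) : ℝ) - i) / ((j.natAbs : ℝ) + ((min |m| |n| : ℤ) : ℝ) + k - i)
  else 0

noncomputable def Fmat (j : ℤ) (m k : ℕ) : ℝ :=
  if 1 ≤ k ∧ k ≤ m then acoef |j| (k - 1) (m : ℤ) ((m : ℤ) + |j|) else 0

lemma prod_desc (c k : ℕ) (hk : k ≤ c) :
    ∏ i ∈ Finset.Icc 1 k, ((c:ℝ) + 1 - i) = (Nat.factorial c) / (Nat.factorial (c - k)) := by
  induction k with
  | zero => simp; rw [div_self (by positivity)]
  | succ k ih =>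
    rw [Finset.prod_Icc_succ_top (by omega), ih (by omega)]
    have h1 : c - k = (c - (k+1)) + 1 := by omega
    have h3 : (Nat.factorial (c - (k+1)) : ℝ) ≠ 0 := by positivity
    have hx : (c:ℝ) + 1 - ((k+1 : ℕ):ℝ) = ((c - (k+1) : ℕ):ℝ) + 1 := by
      push_cast [Nat.cast_sub (by omega : k+1 ≤ c)]; ring
    have h4 : ((c - (k+1) : ℕ):ℝ) + 1 ≠ 0 := by positivity
    rw [h1, Nat.factorial_succ, Nat.cast_mul, Nat.cast_add, Nat.cast_one, hx,
      mul_comm (((c - (k+1) : ℕ):ℝ) + 1), ← div_div, div_mul_cancel₀ _ h4]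

/-- Closed form for the absolute value of the diagonal entries of `F^{|j|}`. -/
theorem Fmat_diag_abs (j : ℤ) (m : ℕ) (hm : 1 ≤ m) :
    |Fmat j m m| =
      (1 / Real.sqrt π) * (1 / Real.sqrt ((j.natAbs : ℝ) + 2 * m - 1)) *
        ((Nat.factorial (m - 1) : ℝ) * (Nat.factorial (j.natAbs + m - 1) : ℝ)) /
          (Nat.factorial (j.natAbs + 2 * m - 2) : ℝ) := by
  have h0 : (0:ℤ) ≤ |j| := abs_nonneg j
  have hmin : min (abs (m:ℤ)) (abs ((m:ℤ) + |j|)) = (m:ℤ) := by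
    rw [abs_of_nonneg (by positivity), abs_of_nonneg (by omega)]
    omega
  have hja : (|j|).natAbs = j.natAbs := Int.natAbs_abs j
  rw [Fmat, if_pos ⟨hm, le_rfl⟩, acoef, if_pos ?side, hmin, hja]
  case side =>
    rw [hmin]
    refine ⟨rfl, ?_, ?_⟩
    · push_cast; omega
    · have : (0:ℤ) < m := by exact_mod_cast hm
      nlinarith
  set a := (j.natAbs : ℝ)
  set k := m - 1 with hk
  have hmk : (k:ℝ) = (m:ℝ) - 1 := by
    rw [hk]; push_cast [Nat.cast_sub hm]; ring
  have ha0 : (0:ℝ) ≤ a := Nat.cast_nonneg _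
  have hm1 : (1:ℝ) ≤ (m:ℝ) := by exact_mod_cast hm
  have hXpos : (0:ℝ) < a + 2 * m - 1 := by linarith
  have hcm : ((m:ℤ):ℝ) = (m:ℝ) := by push_cast; rfl
  have hX2 : a + 2 * (k:ℝ) + 1 = a + 2 * m - 1 := by rw [hmk]; ring
  have hX : ((m:ℤ):ℝ) + a + (k:ℝ) = a + 2 * m - 1 := by rw [hcm, hmk]; ring
  -- product computation
  have hnum : ∏ i ∈ Finset.Icc 1 k, (((m:ℤ):ℝ) - i) = (Nat.factorial k : ℝ) := by
    have h := prod_desc k k le_rfl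
    simp only [Nat.sub_self, Nat.factorial_zero, Nat.cast_one, div_one] at h
    rw [← h]
    refine Finset.prod_congr rfl fun i _ => ?_
    rw [hcm, hmk]; ring
  set c := j.natAbs + 2 * m - 2 with hc
  have hck : k ≤ c := by omega
  have hcc : (c:ℝ) = a + 2 * m - 2 := by
    rw [hc]; push_cast [Nat.cast_sub (by omega : 2 ≤ j.natAbs + 2 * m)]; ring
  have hden : ∏ i ∈ Finset.Icc 1 k, (a + ((m:ℤ):ℝ) + k - i)
      = (Nat.factorial c : ℝ) / (Nat.factorial (j.natAbs + m - 1) : ℝ) := by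
    have h := prod_desc c k hck
    have hck2 : c - k = j.natAbs + m - 1 := by omega
    rw [hck2] at h
    rw [← h]
    refine Finset.prod_congr rfl fun i _ => ?_
    rw [hcm, hmk, hcc]
    ring
  rw [Finset.prod_div_distrib, hnum, hden, hX2, hX]
  set X := a + 2 * (m:ℝ) - 1
  set Q := (Nat.factorial k : ℝ) / ((Nat.factorial c : ℝ) / (Nat.factorial (j.natAbs + m - 1) : ℝ))
    with hQ
  have hrw : -(1 / √π) * √X / X * Q = -((1 / √π) * (√X / X) * Q) := by ring
  have hQ0 : 0 ≤ Q := by rw [hQ]; positivity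
  rw [hrw, abs_neg, abs_of_nonneg, Real.sqrt_div_self']
  · rw [hQ]; field_simp
  · have h1 : 0 ≤ √X / X := div_nonneg (Real.sqrt_nonneg _) hXpos.le
    have h2 : (0:ℝ) ≤ 1 / √π := by positivity
    exact mul_nonneg (mul_nonneg h2 h1) hQ0
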